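/- Let l be a prime with l ≥ 19, set D = (−1)^((l−1)/2) · l, let ζ = exp(2πi/l) ∈ ℂ, and define ψ⁺(x) = ∏ (x − ζ^i) over those i ∈ {1, …, l−1} that are quadratic residues modulo l, and ψ⁻(x) = ∏ (x − ζ^i) over those i ∈ {1, …, l−1} that are quadratic non-residues modulo l. Then for every integer x with x ≥ l², the quantity Q(x) = (ψ⁺(x) − ψ⁻(x))/√D satisfies | |Q(x)| − x^((l−3)/2) | < x^((l−3)/2)/(2√l), where |·| is the complex absolute value and √D denotes a complex square root of D. -/

import Mathlib

/-!
Write `ψ±(x) = x ^ n * ∏ (1 - ζ ^ i / x)` with `n = (l - 1) / 2` (there are as many residues as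
nonresidues). Expanding each product to second order,
`ψ⁺(x) - ψ⁻(x) = -x ^ (n - 1) * g + O(n² x ^ (n - 2))`, where `g = ∑_{QR} ζ ^ i - ∑_{NR} ζ ^ i`
is the quadratic Gauss sum. Since `g² = ±l`, both `g` and `√D` have absolute value `√l`, and the
error term is smaller than `x ^ (n - 1) / 2` as soon as `x > (l - 1)²`.
-/

open Finset

lemma Finset.norm_prod_one_add_sub_one_sub_sum_le {ι R : Type*} [NormedCommRing R] [NormOneClass R]
    (t : Finset ι) (f : ι → R) :
    ‖∏ i ∈ t, (1 + f i) - 1 - ∑ i ∈ t, f i‖ ≤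
      Real.exp (∑ i ∈ t, ‖f i‖) - 1 - ∑ i ∈ t, ‖f i‖ := by
  classical
  induction t using Finset.induction_on with
  | empty => simp
  | insert a t ha IH =>
    rw [prod_insert ha, sum_insert ha, sum_insert ha, Real.exp_add,
      show (1 + f a) * ∏ i ∈ t, (1 + f i) - 1 - (f a + ∑ i ∈ t, f i) =
        (∏ i ∈ t, (1 + f i) - 1 - ∑ i ∈ t, f i) + f a * (∏ i ∈ t, (1 + f i) - 1) by ring]
    refine (norm_add_le_of_le IH
      (norm_mul_le_of_le le_rfl (t.norm_prod_one_add_sub_one_le f))).trans ?_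
    have := mul_le_mul_of_nonneg_right (Real.add_one_le_exp ‖f a‖)
      (Real.exp_nonneg (∑ i ∈ t, ‖f i‖))
    linarith

lemma Real.exp_sub_one_sub_le_sq {y : ℝ} (h₀ : 0 ≤ y) (h₁ : y ≤ 1) : Real.exp y - 1 - y ≤ y ^ 2 :=
  (le_abs_self _).trans (Real.abs_exp_sub_one_sub_id_le (abs_le.2 ⟨by linarith, h₁⟩))

lemma norm_prod_sub_sub_pow_add_le {ι 𝕜 : Type*} [NormedField 𝕜] (s : Finset ι) (w : ι → 𝕜)
    (z : 𝕜) (hw : ∀ i ∈ s, ‖w i‖ ≤ 1) (hz : #s ≤ ‖z‖) :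
    ‖∏ i ∈ s, (z - w i) - z ^ #s + z ^ (#s - 1) * ∑ i ∈ s, w i‖ ≤ (#s / ‖z‖) ^ 2 * ‖z‖ ^ #s := by
  rcases s.eq_empty_or_nonempty with rfl | hs
  · simp
  have hz0 : z ≠ 0 := norm_pos_iff.1 <| (Nat.cast_pos.2 hs.card_pos).trans_le hz
  set f : ι → 𝕜 := fun i => -(w i / z)
  have hprod : ∏ i ∈ s, (z - w i) = z ^ #s * ∏ i ∈ s, (1 + f i) := by
    rw [← prod_const, ← prod_mul_distrib]
    refine prod_congr rfl fun i _ => ?_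
    simp only [f, mul_add, mul_one, mul_neg, mul_div_cancel₀ _ hz0, sub_eq_add_neg]
  have hsum : z ^ (#s - 1) * ∑ i ∈ s, w i = -(z ^ #s * ∑ i ∈ s, f i) := by
    rw [← pow_sub_one_mul hs.card_pos.ne', sum_neg_distrib, ← sum_div]
    field_simp
  have hS : ∑ i ∈ s, ‖f i‖ ≤ #s / ‖z‖ := by
    simpa [f, norm_neg, norm_div, ← sum_div] using
      div_le_div_of_nonneg_right (sum_le_card_nsmul s _ 1 hw) (norm_nonneg z)
  have hS1 : #s / ‖z‖ ≤ 1 := div_le_one_of_le₀ hz (norm_nonneg z)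
  calc ‖∏ i ∈ s, (z - w i) - z ^ #s + z ^ (#s - 1) * ∑ i ∈ s, w i‖
      = ‖z‖ ^ #s * ‖∏ i ∈ s, (1 + f i) - 1 - ∑ i ∈ s, f i‖ := by
        rw [hprod, hsum, ← norm_pow, ← norm_mul]; congr 1; ring
    _ ≤ ‖z‖ ^ #s * (∑ i ∈ s, ‖f i‖) ^ 2 := by
        gcongr
        exact (s.norm_prod_one_add_sub_one_sub_sum_le f).trans
          (Real.exp_sub_one_sub_le_sq (by positivity) (hS.trans hS1))
    _ ≤ (#s / ‖z‖) ^ 2 * ‖z‖ ^ #s := by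
        rw [mul_comm]; gcongr

lemma abs_norm_prod_sub_prod_sub_le {ι 𝕜 : Type*} [NormedField 𝕜] (S T : Finset ι) (w : ι → 𝕜)
    (z : 𝕜) {n : ℕ} (hS : #S = n + 1) (hT : #T = n + 1) (hw : ∀ i, ‖w i‖ ≤ 1)
    (hz : n + 1 ≤ ‖z‖) :
    |‖∏ i ∈ S, (z - w i) - ∏ i ∈ T, (z - w i)‖ - ‖z‖ ^ n * ‖∑ i ∈ S, w i - ∑ i ∈ T, w i‖| ≤
      2 * ((n + 1) / ‖z‖) ^ 2 * ‖z‖ ^ (n + 1) := by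
  have hES := norm_prod_sub_sub_pow_add_le S w z (fun i _ => hw i) (by rw [hS]; exact_mod_cast hz)
  have hET := norm_prod_sub_sub_pow_add_le T w z (fun i _ => hw i) (by rw [hT]; exact_mod_cast hz)
  rw [hS, Nat.add_sub_cancel] at hES
  rw [hT, Nat.add_sub_cancel] at hET
  push_cast at hES hET
  calc |‖∏ i ∈ S, (z - w i) - ∏ i ∈ T, (z - w i)‖ - ‖z‖ ^ n * ‖∑ i ∈ S, w i - ∑ i ∈ T, w i‖|
      = |‖∏ i ∈ S, (z - w i) - ∏ i ∈ T, (z - w i)‖ -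
          ‖-(z ^ n * (∑ i ∈ S, w i - ∑ i ∈ T, w i))‖| := by
        rw [norm_neg, norm_mul, norm_pow]
    _ ≤ ‖∏ i ∈ S, (z - w i) - ∏ i ∈ T, (z - w i) - -(z ^ n * (∑ i ∈ S, w i - ∑ i ∈ T, w i))‖ :=
        abs_norm_sub_norm_le _ _
    _ = ‖(∏ i ∈ S, (z - w i) - z ^ (n + 1) + z ^ n * ∑ i ∈ S, w i) -
          (∏ i ∈ T, (z - w i) - z ^ (n + 1) + z ^ n * ∑ i ∈ T, w i)‖ := by
        congr 1; ring
    _ ≤ _ := (norm_sub_le _ _).trans (by linarith)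

lemma ZMod.isSquare_natCast_iff_exists_modEq {n : ℕ} [NeZero n] (i : ℕ) :
    IsSquare (i : ZMod n) ↔ ∃ a : ℕ, i ≡ a ^ 2 [MOD n] := by
  simp_rw [← ZMod.natCast_eq_natCast_iff, Nat.cast_pow]
  constructor
  · rintro ⟨r, hr⟩
    exact ⟨r.val, by rw [ZMod.natCast_zmod_val, hr, sq]⟩
  · rintro ⟨a, ha⟩
    exact ⟨a, by rw [ha, sq]⟩

lemma sum_Ico_one_natCast_eq_sum {M : Type*} [AddCommMonoid M] (n : ℕ) [NeZero n]
    (F : ZMod n → M) (hF : F 0 = 0) :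
    ∑ i ∈ Ico 1 n, F i = ∑ u, F u := by
  have hrange : ∑ i ∈ range n, F i = ∑ u, F u :=
    sum_nbij' (↑) ZMod.val (by simp) (fun u _ => by simpa using u.val_lt)
      (fun i hi => ZMod.val_cast_of_lt (mem_range.1 hi)) (fun u _ => ZMod.natCast_zmod_val u)
      (fun _ _ => rfl)
  rw [← hrange, sum_range_eq_add_Ico _ (NeZero.pos n), Nat.cast_zero, hF, zero_add]

open scoped Classical in
noncomputable def quadResidues (p : ℕ) : Finset ℕ := {i ∈ Ico 1 p | IsSquare (i : ZMod p)}

open scoped Classical in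
noncomputable def quadNonresidues (p : ℕ) : Finset ℕ := {i ∈ Ico 1 p | ¬ IsSquare (i : ZMod p)}

section

variable {p : ℕ}

lemma ZMod.natCast_ne_zero_of_mem_Ico {i : ℕ} (hi : i ∈ Ico 1 p) : (i : ZMod p) ≠ 0 := by
  rw [mem_Ico] at hi
  rw [Ne, ZMod.natCast_eq_zero_iff]
  exact fun h => (Nat.le_of_dvd (by omega) h).not_gt hi.2

lemma not_dvd_and_exists_sq_modEq_iff_isSquare {i : ℕ} [NeZero p] (hi : i ∈ Ico 1 p) :
    (¬ p ∣ i ∧ ∃ a : ℕ, i ≡ a ^ 2 [MOD p]) ↔ IsSquare (i : ZMod p) := by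
  rw [ZMod.isSquare_natCast_iff_exists_modEq, ← ZMod.natCast_eq_zero_iff]
  exact and_iff_right (ZMod.natCast_ne_zero_of_mem_Ico hi)

open scoped Classical in
lemma filter_not_dvd_and_exists_sq_modEq_eq_quadResidues [NeZero p] :
    (Ico 1 p).filter (fun i => ¬ p ∣ i ∧ ∃ a : ℕ, i ≡ a ^ 2 [MOD p]) = quadResidues p := by
  ext i
  simp only [quadResidues, mem_filter]
  exact and_congr_right not_dvd_and_exists_sq_modEq_iff_isSquare

open scoped Classical in
lemma filter_not_not_dvd_and_exists_sq_modEq_eq_quadNonresidues [NeZero p] :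
    (Ico 1 p).filter (fun i => ¬ (¬ p ∣ i ∧ ∃ a : ℕ, i ≡ a ^ 2 [MOD p])) = quadNonresidues p := by
  ext i
  simp only [quadNonresidues, mem_filter]
  exact and_congr_right fun hi => not_congr (not_dvd_and_exists_sq_modEq_iff_isSquare hi)

lemma card_quadResidues_add_card_quadNonresidues :
    #(quadResidues p) + #(quadNonresidues p) = p - 1 := by
  rw [quadResidues, quadNonresidues, card_filter_add_card_filter_not, Nat.card_Ico]

variable [Fact p.Prime]

lemma sum_quadResidues_sub_sum_quadNonresidues_eq_sum_quadraticChar_smul {M : Type*}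
    [AddCommGroup M] (f : ℕ → M) :
    ∑ i ∈ quadResidues p, f i - ∑ i ∈ quadNonresidues p, f i =
      ∑ i ∈ Ico 1 p, quadraticChar (ZMod p) i • f i := by
  classical
  rw [← sum_filter_add_sum_filter_not (Ico 1 p) (fun i => IsSquare (i : ZMod p)), sub_eq_add_neg,
    ← sum_neg_distrib, quadResidues, quadNonresidues]
  congr 1 <;> refine sum_congr (by congr) fun i hi => ?_ <;> rw [mem_filter] at hi
  · rw [(quadraticChar_one_iff_isSquare (ZMod.natCast_ne_zero_of_mem_Ico hi.1)).2 hi.2, one_smul]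
  · rw [quadraticChar_neg_one_iff_not_isSquare.2 hi.2, neg_one_zsmul]

lemma ringChar_zmod_ne_two (hp : p ≠ 2) : ringChar (ZMod p) ≠ 2 := by
  rwa [ZMod.ringChar_zmod_n]

lemma card_quadResidues_eq_card_quadNonresidues (hp : p ≠ 2) :
    #(quadResidues p) = #(quadNonresidues p) := by
  have h := sum_quadResidues_sub_sum_quadNonresidues_eq_sum_quadraticChar_smul (p := p)
    fun _ => (1 : ℤ)
  simp only [sum_const, smul_eq_mul, mul_one, nsmul_one] at h
  rw [sum_Ico_one_natCast_eq_sum p _ (quadraticChar_zero),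
    quadraticChar_sum_zero (ringChar_zmod_ne_two hp)] at h
  omega

lemma card_quadResidues (hp : p ≠ 2) : #(quadResidues p) = p / 2 := by
  have := card_quadResidues_add_card_quadNonresidues (p := p)
  have := card_quadResidues_eq_card_quadNonresidues hp
  have := (Fact.out : p.Prime).odd_of_ne_two hp
  grind

lemma card_quadNonresidues (hp : p ≠ 2) : #(quadNonresidues p) = p / 2 :=
  card_quadResidues_eq_card_quadNonresidues hp ▸ card_quadResidues hp

lemma sum_quadResidues_sub_sum_quadNonresidues_pow_eq_gaussSum {R : Type*} [CommRing R] {ζ : R}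
    (hζ : ζ ^ p = 1) :
    ∑ i ∈ quadResidues p, ζ ^ i - ∑ i ∈ quadNonresidues p, ζ ^ i =
      gaussSum ((quadraticChar (ZMod p)).ringHomComp (Int.castRingHom R))
        (AddChar.zmodChar p hζ) := by
  rw [sum_quadResidues_sub_sum_quadNonresidues_eq_sum_quadraticChar_smul, gaussSum,
    ← sum_Ico_one_natCast_eq_sum]
  · refine sum_congr rfl fun i _ => ?_
    rw [AddChar.zmodChar_apply' hζ, MulChar.ringHomComp_apply, zsmul_eq_mul, eq_intCast]
  · simp

lemma norm_sum_quadResidues_sub_sum_quadNonresidues_pow (hp : p ≠ 2) {ζ : ℂ}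
    (hζ : IsPrimitiveRoot ζ p) :
    ‖∑ i ∈ quadResidues p, ζ ^ i - ∑ i ∈ quadNonresidues p, ζ ^ i‖ = Real.sqrt p := by
  set χ := (quadraticChar (ZMod p)).ringHomComp (Int.castRingHom ℂ)
  have hχ : χ ≠ 1 := (MulChar.ringHomComp_ne_one_iff Int.cast_injective).2
    (quadraticChar_ne_one (ringChar_zmod_ne_two hp))
  have hsq := gaussSum_sq hχ ((quadraticChar_isQuadratic (ZMod p)).comp _)
    (AddChar.zmodChar_primitive_of_primitive_root p hζ)
  have hχ1 : ‖χ (-1)‖ = 1 := by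
    rcases quadraticChar_dichotomy (F := ZMod p) (neg_ne_zero.2 one_ne_zero) with h | h <;>
      simp [χ, MulChar.ringHomComp_apply, h]
  rw [sum_quadResidues_sub_sum_quadNonresidues_pow_eq_gaussSum hζ.pow_eq_one,
    ← Real.sqrt_sq (norm_nonneg _), ← norm_pow, hsq, norm_mul, hχ1, one_mul, ZMod.card]
  simp

end

lemma norm_ite_sqrt_eq_sqrt_abs (D : ℤ) :
    ‖if 0 ≤ D then ((Real.sqrt D : ℝ) : ℂ) else Complex.I * ((Real.sqrt (-D) : ℝ) : ℂ)‖ =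
      Real.sqrt |(D : ℝ)| := by
  split_ifs with hD
  · rw [Complex.norm_real, Real.norm_of_nonneg (Real.sqrt_nonneg _),
      abs_of_nonneg (by exact_mod_cast hD : (0 : ℝ) ≤ D)]
  · rw [norm_mul, Complex.norm_I, one_mul, Complex.norm_real,
      Real.norm_of_nonneg (Real.sqrt_nonneg _),
      abs_of_neg (by exact_mod_cast not_le.1 hD : (D : ℝ) < 0)]

lemma abs_div_sub_pow_lt {a r X : ℝ} {n : ℕ} (hr : 0 < r) (hX : 4 * (n + 1) ^ 2 < X)
    (h : |a - X ^ n * r| ≤ 2 * ((n + 1) / X) ^ 2 * X ^ (n + 1)) :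
    |a / r - X ^ n| < X ^ n / (2 * r) := by
  have hX0 : 0 < X := lt_of_le_of_lt (by positivity) hX
  have he : 2 * (2 * ((n + 1) / X) ^ 2 * X ^ (n + 1)) < X ^ n := by
    field_simp
    rw [pow_succ X n]
    nlinarith [mul_lt_mul_of_pos_left hX (mul_pos (pow_pos hX0 n) hX0)]
  rw [div_sub' hr.ne', abs_div, abs_of_pos hr, div_lt_div_iff₀ hr (by positivity), mul_comm r]
  nlinarith

open scoped Classical in
theorem psi_diff_estimate
    (l : ℕ) (hl : l.Prime) (hl19 : 19 ≤ l)
    (D : ℤ) (hD : D = (-1) ^ ((l - 1) / 2) * l)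
    (s : ℂ) (hs : s = if 0 ≤ D then ((Real.sqrt D : ℝ) : ℂ)
      else Complex.I * ((Real.sqrt (-D) : ℝ) : ℂ))
    (ζ : ℂ) (hζ : ζ = Complex.exp (2 * Real.pi * Complex.I / l))
    (ψp ψm : ℤ → ℂ)
    (hψp : ∀ x : ℤ, ψp x = ∏ i ∈ (Finset.Ico 1 l).filter
        (fun i => ¬ l ∣ i ∧ ∃ a : ℕ, i ≡ a ^ 2 [MOD l]), ((x : ℂ) - ζ ^ i))
    (hψm : ∀ x : ℤ, ψm x = ∏ i ∈ (Finset.Ico 1 l).filter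
        (fun i => ¬ (¬ l ∣ i ∧ ∃ a : ℕ, i ≡ a ^ 2 [MOD l])), ((x : ℂ) - ζ ^ i))
    (x : ℤ) (hx : (l : ℤ) ^ 2 ≤ x) :
    |‖(ψp x - ψm x) / s‖ - (x : ℝ) ^ ((l - 3) / 2)|
      < (x : ℝ) ^ ((l - 3) / 2) / (2 * Real.sqrt l) := by
  have := Fact.mk hl
  have hl2 : l ≠ 2 := by omega
  have hζl : IsPrimitiveRoot ζ l := hζ ▸ Complex.isPrimitiveRoot_exp l hl.ne_zero
  obtain ⟨k, hk⟩ := hl.odd_of_ne_two hl2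
  rw [filter_not_dvd_and_exists_sq_modEq_eq_quadResidues] at hψp
  rw [filter_not_not_dvd_and_exists_sq_modEq_eq_quadNonresidues] at hψm
  set m := (l - 3) / 2
  have hcardp : #(quadResidues l) = m + 1 := by rw [card_quadResidues hl2]; omega
  have hcardm : #(quadNonresidues l) = m + 1 := by rw [card_quadNonresidues hl2]; omega
  have hX : ‖(x : ℂ)‖ = x := by
    rw [Complex.norm_intCast, abs_of_nonneg (by exact_mod_cast (sq_nonneg (l : ℤ)).trans hx)]
  have hmX : 4 * ((m : ℝ) + 1) ^ 2 < x := by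
    have h2m : (2 * (m + 1) : ℝ) < l := by exact_mod_cast (by omega : 2 * (m + 1) < l)
    have hlx : (l : ℝ) ^ 2 ≤ x := by exact_mod_cast hx
    nlinarith
  have hmain := abs_norm_prod_sub_prod_sub_le (quadResidues l) (quadNonresidues l) (ζ ^ ·) x
    hcardp hcardm (fun i => by rw [norm_pow, hζl.norm'_eq_one hl.ne_zero, one_pow])
    (by rw [hX]; nlinarith)
  rw [← hψp, ← hψm, norm_sum_quadResidues_sub_sum_quadNonresidues_pow hl2 hζl, hX] at hmain
  have hs' : ‖s‖ = Real.sqrt l := by rw [hs, norm_ite_sqrt_eq_sqrt_abs, hD]; simp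
  rw [norm_div, hs']
  exact abs_div_sub_pow_lt (by positivity) hmX hmain
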